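/- arXiv:1605.04609 — 5 statements merged into one kernel-verified Lean document; each statement's English description precedes it below -/
import Mathlib

section
/- In an SRI instance where every preference list has length at most 3, suppose M and M' are two stable matchings and uv is an edge of M' that is a (1,2)-pair (v is u's first choice and u is v's second choice). Then rank(u, M(u)) + rank(v, M(v)) ≤ 4, where rank(a, b) is one plus the number of agents a prefers to b. -/
/-- An instance of the Stable Roommates problem with Incomplete (strict) lists:
a graph together with a rank function, where `rank u v` is one plus the number
of neighbours of `u` that `u` strictly prefers to `v`, and ranks of distinct
neighbours are distinct (strict preferences). -/
structure SRI (V : Type*) [Fintype V] where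
  G : SimpleGraph V
  rank : V → V → ℕ
  rank_eq : ∀ u v, G.Adj u v →
    rank u v = 1 + Set.ncard {w | G.Adj u w ∧ rank u w < rank u v}
  rank_inj : ∀ u v w, G.Adj u v → G.Adj u w → rank u v = rank u w → v = w

variable {V : Type*} [Fintype V]

/-- A matching: a symmetric partial pairing along edges of the graph. -/
structure SRI.Matching (I : SRI V) where
  M : V → Option V
  symm : ∀ u v, M u = some v → M v = some u
  adj : ∀ u v, M u = some v → I.G.Adj u v

/-- Edge `uv` blocks `N`. -/
def SRI.Blocks (I : SRI V) (N : I.Matching) (u v : V) : Prop :=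
  I.G.Adj u v ∧ N.M u ≠ some v ∧
  (N.M u = none ∨ ∃ w, N.M u = some w ∧ I.rank u v < I.rank u w) ∧
  (N.M v = none ∨ ∃ w, N.M v = some w ∧ I.rank v u < I.rank v w)

def SRI.Stable (I : SRI V) (N : I.Matching) : Prop := ∀ u v, ¬ I.Blocks N u v

/-- Cost of a matching: the sum of `rank a (M a)` over matched agents `a`. -/
def SRI.cost (I : SRI V) (N : I.Matching) : ℕ :=
  ∑ v : V, (N.M v).elim 0 (I.rank v)

/-- Every preference list has length at most `d`. -/
def SRI.MaxDeg (I : SRI V) (d : ℕ) : Prop := ∀ v, Set.ncard {w | I.G.Adj v w} ≤ d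

/-- An egalitarian stable matching minimises cost among stable matchings. -/
def SRI.Egalitarian (I : SRI V) (N : I.Matching) : Prop :=
  I.Stable N ∧ ∀ N' : I.Matching, I.Stable N' → I.cost N ≤ I.cost N'

/-!
In a 3-SRI instance, if `u` is not matched to `v` in the stable matching `N`, then `u` prefers
`v` (its first choice) to its situation in `N`, so stability of `N` forces `v` to be matched in
`N` to someone it prefers to `u`, i.e. to its first choice. By the Gusfield–Irving theorem `u`,
being matched in `N'`, is also matched in `N`, at rank at most 3; hence the sum is at most
`3 + 1`.

The Gusfield–Irving theorem is proved by counting. Call `x` an improver from `N` to `N'` if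
`x` strictly prefers its `N'`-partner to its situation in `N`. Stability of `N` makes the
`N'`-partner of an improver from `N` to `N'` an improver from `N'` to `N`, and partner maps
are injective, so the two sets of improvers have the same size and the `N`-partner map is a
bijection from the second onto the first. Every improver from `N` to `N'` is thus matched in `N`,
and an agent matched in `N'` but not in `N` would be one.
-/

namespace SRI

variable {I : SRI V}

lemma rank_pos {u v : V} (h : I.G.Adj u v) : 1 ≤ I.rank u v := by
  rw [I.rank_eq u v h]; omega

lemma rank_le_of_maxDeg {d : ℕ} (hd : I.MaxDeg d) {u v : V} (h : I.G.Adj u v) :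
    I.rank u v ≤ d := by
  set S := {w | I.G.Adj u w ∧ I.rank u w < I.rank u v} with hS
  have hvS : v ∉ S := fun hv => lt_irrefl _ hv.2
  have hsub : insert v S ⊆ {w | I.G.Adj u w} := by
    rintro w (rfl | hw)
    exacts [h, hw.1]
  have hcard : (insert v S).ncard ≤ d :=
    (Set.ncard_le_ncard hsub (Set.toFinite _)).trans (hd u)
  rw [Set.ncard_insert_of_notMem hvS] at hcard
  rw [I.rank_eq u v h, ← hS]; omega

namespace Matching

/-- The partner of `x`, or `x` itself when `x` is unmatched. -/
def partner (N : I.Matching) (x : V) : V := (N.M x).getD x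

lemma partner_eq (N : I.Matching) {x y : V} (h : N.M x = some y) : N.partner x = y := by
  simp [partner, h]

lemma partner_injOn (N : I.Matching) : Set.InjOn N.partner {x | (N.M x).isSome} := by
  intro x hx x' hx' hxx'
  obtain ⟨y, hy⟩ := Option.isSome_iff_exists.1 hx
  obtain ⟨y', hy'⟩ := Option.isSome_iff_exists.1 hx'
  rw [N.partner_eq hy, N.partner_eq hy'] at hxx'
  subst hxx'
  simpa using (N.symm x y hy).symm.trans (N.symm x' y hy')

end Matching

def Improves (I : SRI V) (N N' : I.Matching) (x : V) : Prop :=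
  ∃ y, N'.M x = some y ∧ (N.M x = none ∨ ∃ z, N.M x = some z ∧ I.rank x y < I.rank x z)

lemma Improves.isSome {N N' : I.Matching} {x : V} (h : I.Improves N N' x) :
    (N'.M x).isSome := by
  obtain ⟨y, hy, -⟩ := h
  simp [hy]

/-- Otherwise `x y` would block `N`. -/
lemma Stable.exists_rank_lt_of_improves {N N' : I.Matching} (hN : I.Stable N) {x y : V}
    (hxy : N'.M x = some y) (hx : I.Improves N N' x) :
    ∃ z, N.M y = some z ∧ I.rank y z < I.rank y x := by
  obtain ⟨y', hy', hbetter⟩ := hx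
  obtain rfl : y = y' := Option.some.inj (hxy.symm.trans hy')
  have hadj : I.G.Adj x y := N'.adj x y hxy
  have hNxy : N.M x ≠ some y := by
    rintro hxy'
    rcases hbetter with h | ⟨z, hz, hlt⟩
    · simp [hxy'] at h
    · obtain rfl : y = z := Option.some.inj (hxy'.symm.trans hz)
      exact lt_irrefl _ hlt
  have hnot := hN x y
  simp only [Blocks, not_and, not_or, not_exists] at hnot
  obtain ⟨hnone, hle⟩ := hnot hadj hNxy hbetter
  obtain ⟨z, hz⟩ := Option.ne_none_iff_exists'.1 hnone
  have hzx : z ≠ x := by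
    rintro rfl
    exact hNxy (N.symm y z hz)
  refine ⟨z, hz, (not_lt.1 (hle z hz)).lt_of_ne fun h => hzx ?_⟩
  exact I.rank_inj y z x (N.adj y z hz) hadj.symm h

lemma Stable.mapsTo_partner_improves {N N' : I.Matching} (hN : I.Stable N) :
    Set.MapsTo N'.partner {x | I.Improves N N' x} {x | I.Improves N' N x} := by
  intro x hx
  obtain ⟨y, hy⟩ := Option.isSome_iff_exists.1 hx.isSome
  obtain ⟨z, hz, hlt⟩ := hN.exists_rank_lt_of_improves hy hx
  rw [Set.mem_ofPred_eq, N'.partner_eq hy]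
  exact ⟨z, hz, Or.inr ⟨x, N'.symm x y hy, hlt⟩⟩

lemma Stable.ncard_improves_le {N N' : I.Matching} (hN : I.Stable N) :
    {x | I.Improves N N' x}.ncard ≤ {x | I.Improves N' N x}.ncard :=
  Set.ncard_le_ncard_of_injOn _ hN.mapsTo_partner_improves
    (N'.partner_injOn.mono fun _ hx => hx.isSome)

/-- Gusfield–Irving: all stable matchings match the same agents. -/
theorem Stable.isSome_of_isSome {N N' : I.Matching} (hN : I.Stable N) (hN' : I.Stable N')
    {x : V} (hx : (N'.M x).isSome) : (N.M x).isSome := by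
  set P := {x | I.Improves N N' x}
  set Q := {x | I.Improves N' N x}
  have hinj : Set.InjOn N.partner Q := N.partner_injOn.mono fun _ hy => hy.isSome
  have himage : N.partner '' Q = P := by
    refine Set.eq_of_subset_of_ncard_le (hN'.mapsTo_partner_improves.image_subset) ?_
    rw [hinj.ncard_image]
    exact hN.ncard_improves_le
  by_contra hnone
  obtain ⟨y, hy⟩ := Option.isSome_iff_exists.1 hx
  have hxP : x ∈ P := ⟨y, hy, Or.inl (Option.not_isSome_iff_eq_none.1 hnone)⟩
  rw [← himage] at hxP
  obtain ⟨w, hwQ, rfl⟩ := hxP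
  obtain ⟨z, hz, -⟩ := hwQ
  rw [N.partner_eq hz, N.symm w z hz] at hnone
  exact hnone rfl

end SRI

/-- In a 3-SRI instance, if `uv` is a (1,2)-pair of a stable matching `N'`,
then in any stable matching `N` the ranks of the partners of `u` and `v` sum to at most 4. -/
theorem stmt2 (I : SRI V) (h3 : I.MaxDeg 3) (N N' : I.Matching)
    (hN : I.Stable N) (hN' : I.Stable N') (u v : V)
    (hm : N'.M u = some v) (h1 : I.rank u v = 1) (h2 : I.rank v u = 2) :
    ∃ a b, N.M u = some a ∧ N.M v = some b ∧ I.rank u a + I.rank v b ≤ 4 := by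
  by_cases huv : N.M u = some v
  · exact ⟨v, u, huv, N.symm u v huv, by omega⟩
  have hu : (N'.M u).isSome := Option.isSome_iff_exists.2 ⟨v, hm⟩
  obtain ⟨a, ha⟩ := Option.isSome_iff_exists.1 (hN.isSome_of_isSome hN' hu)
  have hav : a ≠ v := by rintro rfl; exact huv ha
  have hva : I.rank u v < I.rank u a := by
    have hne : I.rank u a ≠ I.rank u v := fun h =>
      hav (I.rank_inj u a v (N.adj u a ha) (N'.adj u v hm) h)
    have := SRI.rank_pos (N.adj u a ha)
    omega
  obtain ⟨b, hb, hbu⟩ := hN.exists_rank_lt_of_improves hm ⟨v, hm, Or.inr ⟨a, ha, hva⟩⟩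
  have hua : I.rank u a ≤ 3 := SRI.rank_le_of_maxDeg h3 (N.adj u a ha)
  exact ⟨a, b, ha, hb, by omega⟩
end

section
/- In an SRI instance with degree at most 3, if uv is an edge that is a (3,3)-pair (each endpoint ranks the other last among exactly 3 neighbours) and uv belongs to some stable matching, then uv belongs to every stable matching. -/
variable {V : Type*} [Fintype V]

/-!
Compare any stable matching `N` with a stable matching `N₀` containing `uv`. If an agent `x`
strictly prefers its `N`-partner `a` to its `N₀`-partner, then stability of `N₀` forces `a` to
prefer its `N₀`-partner `c` to `x`, and stability of `N` in turn forces `c` to prefer `N` to `N₀`.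
So `x ↦ N₀(N(x))` is an injection of the finite set of agents preferring `N` to `N₀` into itself,
hence a bijection; consequently the `N₀`-partner of every such agent prefers `N₀` to `N`.
If `N(u) ≠ v`, then either `u` prefers `N` (it ranks `v` last), which would make `v` prefer `u`,
its last choice, to its `N`-partner; or `u` is unmatched in `N`, so `v` prefers `N` (else `uv`
blocks `N`), which would make `u` matched in `N`.
-/

namespace SRI

variable {I : SRI V} {x y z a b : V}

lemma rank_le_ncard (hxy : I.G.Adj x y) : I.rank x y ≤ Set.ncard {w | I.G.Adj x w} := by
  have hss : {w | I.G.Adj x w ∧ I.rank x w < I.rank x y} ⊂ {w | I.G.Adj x w} :=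
    ⟨fun _ hw => hw.1, fun hsub => lt_irrefl _ (hsub (show y ∈ {w | I.G.Adj x w} from hxy)).2⟩
  have := Set.ncard_lt_ncard hss (Set.toFinite _)
  rw [I.rank_eq x y hxy]
  omega

lemma rank_le_of_maxDeg_s3 {d : ℕ} (hd : I.MaxDeg d) (hxy : I.G.Adj x y) : I.rank x y ≤ d :=
  (rank_le_ncard hxy).trans (hd x)

lemma rank_lt_of_le_of_ne (hy : I.G.Adj x y) (hz : I.G.Adj x z) (hne : y ≠ z)
    (hle : I.rank x y ≤ I.rank x z) : I.rank x y < I.rank x z :=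
  lt_of_le_of_ne hle fun h => hne (I.rank_inj x y z hy hz h)

lemma Matching.eq_of_eq_some (N : I.Matching) (hx : N.M x = some a) (hy : N.M y = some a) :
    x = y :=
  Option.some.inj ((N.symm x a hx).symm.trans (N.symm y a hy))

lemma Stable.exists_partner_rank_lt {N : I.Matching} (hN : I.Stable N) (hxa : I.G.Adj x a)
    (hne : N.M x ≠ some a)
    (hx : N.M x = none ∨ ∃ w, N.M x = some w ∧ I.rank x a < I.rank x w) :
    ∃ c, N.M a = some c ∧ I.rank a c < I.rank a x := by
  have hnot : ¬ (N.M a = none ∨ ∃ w, N.M a = some w ∧ I.rank a x < I.rank a w) :=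
    fun ha => hN x a ⟨hxa, hne, hx, ha⟩
  push Not at hnot
  obtain ⟨c, hc⟩ := Option.ne_none_iff_exists'.mp hnot.1
  have hcx : c ≠ x := by
    rintro rfl
    exact hne (N.symm a c hc)
  exact ⟨c, hc, rank_lt_of_le_of_ne (N.adj a c hc) hxa.symm hcx (hnot.2 c hc)⟩

def Prefers (I : SRI V) (N N' : I.Matching) (x : V) : Prop :=
  ∃ a b, N.M x = some a ∧ N'.M x = some b ∧ I.rank x a < I.rank x b

lemma Prefers.swap_partner_left {N N' : I.Matching} (hN' : I.Stable N') (hx : I.Prefers N N' x)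
    (ha : N.M x = some a) : I.Prefers N' N a := by
  obtain ⟨a', b, ha', hb, hlt⟩ := hx
  rw [ha] at ha'
  cases ha'
  have hne : N'.M x ≠ some a := by
    rw [hb]
    rintro ⟨⟩
    exact lt_irrefl _ hlt
  obtain ⟨c, hc, hca⟩ := hN'.exists_partner_rank_lt (N.adj x a ha) hne (Or.inr ⟨b, hb, hlt⟩)
  exact ⟨c, x, hc, N.symm x a ha, hca⟩

lemma Prefers.swap_partner_right {N N' : I.Matching} (hN : I.Stable N) (hN' : I.Stable N')
    (hx : I.Prefers N N' x) (hb : N'.M x = some b) : I.Prefers N' N b := by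
  set S := {y | I.Prefers N N' y}
  set g : V → V := fun y => ((N.M y).bind N'.M).getD y
  have g_eq : ∀ {y a c}, N.M y = some a → N'.M a = some c → g y = c := by
    intro y a c ha hc
    simp only [g, ha, Option.bind_some, hc, Option.getD_some]
  have hmaps : Set.MapsTo g S S := by
    intro y (hy : I.Prefers N N' y)
    obtain ⟨a, -, ha, -⟩ := id hy
    have ha' := hy.swap_partner_left hN' ha
    obtain ⟨c, -, hc, -⟩ := id ha'
    rw [g_eq ha hc]
    exact ha'.swap_partner_left hN hc
  have hinj : Set.InjOn g S := by
    intro y (hy : I.Prefers N N' y) y' (hy' : I.Prefers N N' y') hgy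
    obtain ⟨a, -, ha, -⟩ := id hy
    obtain ⟨a', -, ha', -⟩ := id hy'
    obtain ⟨c, -, hc, -⟩ := hy.swap_partner_left hN' ha
    obtain ⟨c', -, hc', -⟩ := hy'.swap_partner_left hN' ha'
    rw [g_eq ha hc, g_eq ha' hc'] at hgy
    subst hgy
    obtain rfl := N'.eq_of_eq_some hc hc'
    exact N.eq_of_eq_some ha ha'
  obtain ⟨y, hy, hgy⟩ :=
    ((Set.toFinite S).injOn_iff_bijOn_of_mapsTo hmaps).mp hinj |>.surjOn hx
  have hy : I.Prefers N N' y := hy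
  obtain ⟨a, -, ha, -⟩ := id hy
  have ha' := hy.swap_partner_left hN' ha
  obtain ⟨c, -, hc, -⟩ := id ha'
  rw [g_eq ha hc] at hgy
  subst hgy
  obtain rfl : a = b := Option.some.inj ((N'.symm a _ hc).symm.trans hb)
  exact ha'

end SRI

/-- In a 3-SRI instance, a (3,3)-pair contained in some stable matching
belongs to every stable matching. -/
theorem stmt3 (I : SRI V) (h3 : I.MaxDeg 3) (u v : V) (hadj : I.G.Adj u v)
    (hu : I.rank u v = 3) (hv : I.rank v u = 3)
    (N0 : I.Matching) (hN0 : I.Stable N0) (hm0 : N0.M u = some v)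
    (N : I.Matching) (hN : I.Stable N) : N.M u = some v := by
  by_contra hne
  have hvu : N0.M v = some u := N0.symm u v hm0
  cases hNu : N.M u with
  | none =>
    obtain ⟨w, hw, hlt⟩ :=
      hN.exists_partner_rank_lt hadj hne (Or.inl hNu)
    have hv_pref : I.Prefers N N0 v := ⟨w, u, hw, hvu, hlt⟩
    obtain ⟨_, _, _, hu_matched, _⟩ := hv_pref.swap_partner_right hN hN0 hvu
    simp [hNu] at hu_matched
  | some w =>
    have hwv : w ≠ v := fun h => hne (h ▸ hNu)
    have hlt : I.rank u w < I.rank u v := by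
      have := SRI.rank_le_of_maxDeg_s3 h3 (N.adj u w hNu)
      exact SRI.rank_lt_of_le_of_ne (N.adj u w hNu) hadj hwv (by omega)
    have hu_pref : I.Prefers N N0 u := ⟨w, v, hNu, hm0, hlt⟩
    obtain ⟨u', y, hu', hy, hlt'⟩ := hu_pref.swap_partner_right hN hN0 hm0
    obtain rfl : u' = u := Option.some.inj (hu'.symm.trans hvu)
    have := SRI.rank_le_of_maxDeg_s3 h3 (N.adj v y hy)
    omega
end

section
/- Let C be a cycle of odd length in a roommates instance with ties (each vertex's preference relation over its two neighbours is either a strict order or a tie), and suppose C is not an odd party, i.e., it is not the case that every vertex strictly prefers its successor to its predecessor or every vertex strictly prefers its predecessor to its successor. Then there exists a vertex v on C such that neither neighbour of v strictly prefers v to its other neighbour. -/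
/-- An instance of the Stable Roommates problem with Ties and Incomplete lists (strict weak orders, ties allowed):
a graph together with a rank function, where `rank u v` is one plus the number
of neighbours of `u` that `u` strictly prefers to `v`, and ranks of distinct
neighbours are distinct (strict preferences). -/
structure SRTI (V : Type*) [Fintype V] where
  G : SimpleGraph V
  rank : V → V → ℕ
  rank_eq : ∀ u v, G.Adj u v →
    rank u v = 1 + Set.ncard {w | G.Adj u w ∧ rank u w < rank u v}

variable {V : Type*} [Fintype V]

/-- A matching: a symmetric partial pairing along edges of the graph. -/
structure SRTI.Matching (I : SRTI V) where
  M : V → Option V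
  symm : ∀ u v, M u = some v → M v = some u
  adj : ∀ u v, M u = some v → I.G.Adj u v

/-- Edge `uv` blocks `N`. -/
def SRTI.Blocks (I : SRTI V) (N : I.Matching) (u v : V) : Prop :=
  I.G.Adj u v ∧ N.M u ≠ some v ∧
  (N.M u = none ∨ ∃ w, N.M u = some w ∧ I.rank u v < I.rank u w) ∧
  (N.M v = none ∨ ∃ w, N.M v = some w ∧ I.rank v u < I.rank v w)

def SRTI.Stable (I : SRTI V) (N : I.Matching) : Prop := ∀ u v, ¬ I.Blocks N u v

/-- Cost of a matching: the sum of `rank a (M a)` over matched agents `a`. -/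
def SRTI.cost (I : SRTI V) (N : I.Matching) : ℕ :=
  ∑ v : V, (N.M v).elim 0 (I.rank v)

/-- Every preference list has length at most `d`. -/
def SRTI.MaxDeg (I : SRTI V) (d : ℕ) : Prop := ∀ v, Set.ncard {w | I.G.Adj v w} ≤ d

/-- An egalitarian stable matching minimises cost among stable matchings. -/
def SRTI.Egalitarian (I : SRTI V) (N : I.Matching) : Prop :=
  I.Stable N ∧ ∀ N' : I.Matching, I.Stable N' → I.cost N ≤ I.cost N'

/-- In an odd cycle with ties that is not an odd party (in either orientation),
some vertex is strictly preferred by neither of its neighbours. -/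
theorem stmt9 (k : ℕ) [NeZero k] (hk : 3 ≤ k) (hodd : Odd k) (I : SRTI (ZMod k))
    (hadj : ∀ i j : ZMod k, I.G.Adj i j ↔ (j = i + 1 ∨ j = i - 1))
    (hnp : ¬ ((∀ i : ZMod k, I.rank i (i + 1) < I.rank i (i - 1)) ∨
              (∀ i : ZMod k, I.rank i (i - 1) < I.rank i (i + 1)))) :
    ∃ v : ZMod k,
      ¬ (I.rank (v + 1) v < I.rank (v + 1) (v + 2)) ∧
      ¬ (I.rank (v - 1) v < I.rank (v - 1) (v - 2)) := by

  by_contra hc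
  push_neg at hc
  -- hc : ∀ v, ¬ (rank (v+1) v < rank (v+1) (v+2)) → rank (v-1) v < rank (v-1) (v-2)
  have step : ∀ u : ZMod k, ¬ (I.rank u (u+1) < I.rank u (u-1)) →
      I.rank (u+2) ((u+2)-1) < I.rank (u+2) ((u+2)+1) := by
    intro u hu
    have h1 := hc (u+1)
    have e1 : u + 1 + 1 = u + 2 := by ring
    have e2 : u + 1 + 2 = u + 2 + 1 := by ring
    have e3 : u + 1 - 1 = u := by ring
    have e4 : u + 1 - 2 = u - 1 := by ring
    rw [e1, e2, e3, e4] at h1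
    have e5 : u + 2 - 1 = u + 1 := by ring
    rw [e5]
    by_contra hb
    exact hu (h1 (not_lt.1 hb))
  by_cases hA : ∀ i : ZMod k, I.rank i (i+1) < I.rank i (i-1)
  · exact hnp (Or.inl hA)
  obtain ⟨w, hw⟩ := not_forall.1 hA
  apply hnp
  right
  have key : ∀ n : ℕ, I.rank (w+2+2*(n : ZMod k)) ((w+2+2*(n : ZMod k))-1)
      < I.rank (w+2+2*(n : ZMod k)) ((w+2+2*(n : ZMod k))+1) := by
    intro n
    induction n with
    | zero => simpa using step w hw
    | succ m ih =>
        have hs := step (w+2+2*(m : ZMod k)) (lt_asymm ih)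
        have e : w + 2 + 2*((m+1 : ℕ) : ZMod k) = (w+2+2*(m : ZMod k)) + 2 := by
          push_cast; ring
        rw [e]
        exact hs
  intro i
  have h2 : IsUnit (2 : ZMod k) := by
    have : ((2 : ℕ) : ZMod k) = (2 : ZMod k) := by norm_cast
    rw [← this, ZMod.isUnit_iff_coprime]
    rwa [Nat.coprime_two_left]
  obtain ⟨u, hu⟩ := h2
  obtain ⟨n, hn⟩ := ZMod.natCast_zmod_surjective (((u⁻¹ : (ZMod k)ˣ) : ZMod k) * (i - w - 2))
  have hx : 2 * ((n : ZMod k)) = i - w - 2 := by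
    rw [hn, ← hu]
    exact Units.mul_inv_cancel_left u _
  have hi : i = w + 2 + 2 * (n : ZMod k) := by linear_combination -hx
  rw [hi]
  exact key n
end

section
/- Every odd party admits a matching with exactly one blocking edge: if C = ⟨v₁,…,v_k⟩ (k odd) is an odd cycle where each v_i strictly prefers v_{i+1} to v_{i−1}, then the matching {v₂v₃, v₄v₅, …, v_{k−1}v_k} (leaving v₁ unmatched) has exactly one blocking edge. -/
variable {V : Type*} [Fintype V]

/-- An odd party admits a matching with exactly one blocking edge: leave `v₁`
(here the vertex `0`) unmatched and match the remaining vertices along the path. -/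
theorem stmt13 (k : ℕ) [NeZero k] (hk : 3 ≤ k) (hodd : Odd k) (I : SRTI (ZMod k))
    (hadj : ∀ i j : ZMod k, I.G.Adj i j ↔ (j = i + 1 ∨ j = i - 1))
    (hpref : ∀ i : ZMod k, I.rank i (i + 1) < I.rank i (i - 1)) :
    ∃ N : I.Matching, N.M 0 = none ∧ (∀ u, u ≠ (0 : ZMod k) → N.M u ≠ none) ∧
      {p : ZMod k × ZMod k | I.Blocks N p.1 p.2}.ncard = 2 := by
  have hk1 : k % 2 = 1 := Nat.odd_iff.mp hodd
  have h1ne : (1 : ZMod k) ≠ 0 := by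
    intro h
    have h2 : ((1 : ℕ) : ZMod k) = 0 := by exact_mod_cast h
    have := (ZMod.natCast_eq_zero_iff 1 k).mp h2
    have := Nat.le_of_dvd one_pos this
    omega
  have h2ne : (2 : ZMod k) ≠ 0 := by
    intro h
    have h2 : ((2 : ℕ) : ZMod k) = 0 := by exact_mod_cast h
    have := (ZMod.natCast_eq_zero_iff 2 k).mp h2
    have := Nat.le_of_dvd two_pos this
    omega
  have hm1ne : (-1 : ZMod k) ≠ 0 := neg_ne_zero.mpr h1ne
  have hvlt : ∀ v : ZMod k, v.val < k := fun v => ZMod.val_lt v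
  have hvz : ∀ v : ZMod k, v ≠ 0 → v.val ≠ 0 := fun v hv h =>
    hv ((ZMod.val_eq_zero v).mp h)
  -- value of v + 1 for odd-val v
  have L1 : ∀ v : ZMod k, v.val % 2 = 1 → (v + 1).val = v.val + 1 := by
    intro v ho
    have hlt : v.val + 1 < k := by have := hvlt v; omega
    have : v + 1 = ((v.val + 1 : ℕ) : ZMod k) := by
      rw [Nat.cast_add, Nat.cast_one, ZMod.natCast_zmod_val]
    rw [this, ZMod.val_cast_of_lt hlt]
  -- value of v - 1 for v ≠ 0
  have L2 : ∀ v : ZMod k, v ≠ 0 → (v - 1).val = v.val - 1 := by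
    intro v hv
    have h0 : v.val ≠ 0 := hvz v hv
    have hlt : v.val - 1 < k := by have := hvlt v; omega
    have : v - 1 = ((v.val - 1 : ℕ) : ZMod k) := by
      rw [Nat.cast_sub (by omega), Nat.cast_one, ZMod.natCast_zmod_val]
    rw [this, ZMod.val_cast_of_lt hlt]
  -- the matching function
  set f : ZMod k → Option (ZMod k) := fun v =>
    if v = 0 then none else if v.val % 2 = 1 then some (v + 1) else some (v - 1)
    with hf
  have hf0 : f 0 = none := by simp [hf]
  have hfodd : ∀ v : ZMod k, v ≠ 0 → v.val % 2 = 1 → f v = some (v + 1) := by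
    intro v hv ho; simp [hf, hv, ho]
  have hfeven : ∀ v : ZMod k, v ≠ 0 → v.val % 2 = 0 → f v = some (v - 1) := by
    intro v hv he; simp [hf, hv, he]
  have hpar : ∀ v : ZMod k, v.val % 2 = 0 ∨ v.val % 2 = 1 :=
    fun v => Nat.mod_two_eq_zero_or_one _
  -- symmetry
  have hsymm : ∀ u v : ZMod k, f u = some v → f v = some u := by
    intro u v h
    by_cases hu0 : u = 0
    · rw [hu0, hf0] at h; exact absurd h (by simp)
    rcases hpar u with he | ho
    · rw [hfeven u hu0 he] at h
      have hv : v = u - 1 := (Option.some_injective _ h).symm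
      have hvne : v ≠ 0 := by
        rw [hv]; intro hz
        have : (u - 1).val = 0 := by rw [hz, ZMod.val_zero]
        rw [L2 u hu0] at this
        have := hvz u hu0; omega
      have hvv : v.val = u.val - 1 := by rw [hv, L2 u hu0]
      have hvo : v.val % 2 = 1 := by have := hvz u hu0; omega
      rw [hfodd v hvne hvo, hv, sub_add_cancel]
    · rw [hfodd u hu0 ho] at h
      have hv : v = u + 1 := (Option.some_injective _ h).symm
      have hvv : v.val = u.val + 1 := by rw [hv, L1 u ho]
      have hvne : v ≠ 0 := by
        intro hz; rw [hz, ZMod.val_zero] at hvv; omega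
      have hve : v.val % 2 = 0 := by omega
      rw [hfeven v hvne hve, hv, add_sub_cancel_right]
  have hadjf : ∀ u v : ZMod k, f u = some v → I.G.Adj u v := by
    intro u v h
    by_cases hu0 : u = 0
    · rw [hu0, hf0] at h; exact absurd h (by simp)
    rcases hpar u with he | ho
    · rw [hfeven u hu0 he] at h
      exact (hadj u v).mpr (Or.inr (Option.some_injective _ h).symm)
    · rw [hfodd u hu0 ho] at h
      exact (hadj u v).mpr (Or.inl (Option.some_injective _ h).symm)
  refine ⟨⟨f, hsymm, hadjf⟩, hf0, ?_, ?_⟩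
  · intro u hu
    show f u ≠ none
    rcases hpar u with he | ho
    · rw [hfeven u hu he]; simp
    · rw [hfodd u hu ho]; simp
  -- the blocking set is exactly {(-1,0),(0,-1)}
  have hm1e : (-1 : ZMod k).val % 2 = 0 := by
    have hval : (-1 : ZMod k).val = k - 1 := by
      obtain ⟨m, rfl⟩ : ∃ m, k = m + 1 := ⟨k - 1, by omega⟩
      simpa using ZMod.val_neg_one m
    omega
  have hfm1 : f (-1) = some (-1 - 1) := hfeven (-1) hm1ne hm1e
  have hset : {p : ZMod k × ZMod k | I.Blocks ⟨f, hsymm, hadjf⟩ p.1 p.2} =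
      {((-1 : ZMod k), (0 : ZMod k)), ((0 : ZMod k), (-1 : ZMod k))} := by
    ext ⟨u, v⟩
    simp only [Set.mem_setOf_eq, Set.mem_insert_iff, Set.mem_singleton_iff,
      Prod.mk.injEq]
    constructor
    · rintro ⟨hA, hne, hu, hv⟩
      change f u ≠ some v at hne
      change (f u = none ∨ ∃ w, f u = some w ∧ _) at hu
      change (f v = none ∨ ∃ w, f v = some w ∧ _) at hv
      rcases (hadj u v).mp hA with h1 | h1
      · -- v = u + 1
        by_cases hu0 : u = 0
        · -- u = 0, v = 1 : not blocking
          exfalso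
          subst hu0
          rw [zero_add] at h1
          have hv1 : (1 : ZMod k).val = 1 := by
            have : ((1 : ℕ) : ZMod k).val = 1 := ZMod.val_cast_of_lt (by omega)
            simpa using this
          have hfo : f v = some (v + 1) := hfodd v (h1 ▸ h1ne) (by rw [h1, hv1])
          rcases hv with h | ⟨w, hw, hlt⟩
          · rw [hfo] at h; exact absurd h (by simp)
          · rw [hfo] at hw
            have : w = v + 1 := (Option.some_injective _ hw).symm
            subst this
            have : (0 : ZMod k) = v - 1 := by rw [h1]; ring
            rw [this] at hlt
            exact absurd hlt (lt_asymm (hpref v))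
        rcases hpar u with he | ho
        · -- u even: matched to u-1, prefers v = u+1
          by_cases hv0 : v = 0
          · -- blocking pair (-1, 0)
            left
            constructor
            · have : u + 1 = 0 := by rw [← h1, hv0]
              linear_combination this
            · exact hv0
          · exfalso
            rcases hpar v with hve | hvo
            · have hfv : f v = some (v - 1) := hfeven v hv0 hve
              rcases hv with h | ⟨w, hw, hlt⟩
              · rw [hfv] at h; exact absurd h (by simp)
              · rw [hfv] at hw
                have hwv : w = v - 1 := (Option.some_injective _ hw).symm
                have huv : u = v - 1 := by rw [h1]; ring
                rw [hwv, ← huv] at hlt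
                exact absurd hlt (lt_irrefl _)
            · have hfv : f v = some (v + 1) := hfodd v hv0 hvo
              rcases hv with h | ⟨w, hw, hlt⟩
              · rw [hfv] at h; exact absurd h (by simp)
              · rw [hfv] at hw
                have hwv : w = v + 1 := (Option.some_injective _ hw).symm
                have huv : u = v - 1 := by rw [h1]; ring
                rw [hwv, huv] at hlt
                exact absurd hlt (lt_asymm (hpref v))
        · -- u odd: matched to u+1 = v, contradiction with hne
          exfalso
          exact hne (by rw [hfodd u hu0 ho, h1])
      · -- v = u - 1
        by_cases hu0 : u = 0
        · -- blocking pair (0, -1)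
          right
          exact ⟨hu0, by rw [h1, hu0, zero_sub]⟩
        exfalso
        rcases hpar u with he | ho
        · exact hne (by rw [hfeven u hu0 he, h1])
        · have hfu : f u = some (u + 1) := hfodd u hu0 ho
          rcases hu with h | ⟨w, hw, hlt⟩
          · rw [hfu] at h; exact absurd h (by simp)
          · rw [hfu] at hw
            have hwv : w = u + 1 := (Option.some_injective _ hw).symm
            rw [hwv, h1] at hlt
            exact absurd hlt (lt_asymm (hpref u))
    · rintro (⟨rfl, rfl⟩ | ⟨rfl, rfl⟩)
      · -- (-1, 0)
        refine ⟨(hadj _ _).mpr (Or.inl (by ring)), ?_, ?_, ?_⟩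
        · change f (-1) ≠ some 0
          rw [hfm1]
          intro h
          have : (-1 - 1 : ZMod k) = 0 := Option.some_injective _ h
          apply h2ne
          linear_combination -this
        · right
          refine ⟨-1 - 1, hfm1, ?_⟩
          have := hpref (-1 : ZMod k)
          rwa [neg_add_cancel] at this
        · exact Or.inl hf0
      · -- (0, -1)
        refine ⟨(hadj _ _).mpr (Or.inr (by ring)), ?_, Or.inl hf0, ?_⟩
        · change f 0 ≠ some (-1); rw [hf0]; simp
        · right
          refine ⟨-1 - 1, hfm1, ?_⟩
          have := hpref (-1 : ZMod k)
          rwa [neg_add_cancel] at this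
  rw [hset]
  rw [Set.ncard_pair]
  intro h
  exact hm1ne (congrArg Prod.fst h)
end

section
/- Consider the 5-vertex path gadget with vertices y³, y⁴, y², y¹ arranged so that: y³ ranks y⁴ first and y² second; y⁴ ranks y² first and y³ second; y² ranks y¹ first, y³ second, y⁴ third; y¹ ranks y² second (and some outside vertex first). In any matching M of the whole instance with no blocking edge among these vertices in which y³ is matched, the edge y³y⁴ must belong to M. -/
variable {V : Type*} [Fintype V]

/-- The path gadget of the 3-SRTI reduction: in any matching admitting no
blocking edge among the gadget vertices and in which `y³` is matched,
the edge `y³y⁴` must be used. -/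
theorem stmt14 (I : SRI V) (y1 y2 y3 y4 : V)
    (hd : List.Nodup [y1, y2, y3, y4])
    (h34 : I.G.Adj y3 y4) (h32 : I.G.Adj y3 y2) (h42 : I.G.Adj y4 y2)
    (h21 : I.G.Adj y2 y1)
    (r34 : I.rank y3 y4 = 1) (r32 : I.rank y3 y2 = 2)
    (r42 : I.rank y4 y2 = 1) (r43 : I.rank y4 y3 = 2)
    (r21 : I.rank y2 y1 = 1) (r23 : I.rank y2 y3 = 2) (r24 : I.rank y2 y4 = 3)
    (r12 : I.rank y1 y2 = 2)
    (n3 : ∀ w, I.G.Adj y3 w → w = y4 ∨ w = y2)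
    (n4 : ∀ w, I.G.Adj y4 w → w = y2 ∨ w = y3)
    (n2 : ∀ w, I.G.Adj y2 w → w = y1 ∨ w = y3 ∨ w = y4)
    (N : I.Matching)
    (hst : ∀ u v, u ∈ ({y1, y2, y3, y4} : Set V) → v ∈ ({y1, y2, y3, y4} : Set V) →
      ¬ I.Blocks N u v)
    (hm : N.M y3 ≠ none) : N.M y3 = some y4 := by
  simp only [List.nodup_cons, List.mem_cons, List.not_mem_nil, or_false,
    List.mem_singleton, not_or] at hd
  obtain ⟨⟨h12, h13, h14⟩, ⟨h23, h24⟩, h34', -⟩ := hd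
  obtain ⟨w, hw⟩ := Option.ne_none_iff_exists'.mp hm
  rcases n3 w (N.adj _ _ hw) with rfl | hw2
  · exact hw
  · -- y3 matched to y2; show y3y4 blocks
    rw [hw2] at hw
    exfalso
    have hy2 : N.M y2 = some y3 := N.symm _ _ hw
    have hy4 : N.M y4 = none := by
      rcases h : N.M y4 with _ | u
      · rfl
      · exfalso
        rcases n4 u (N.adj _ _ h) with h2 | h2
        · subst h2
          have := N.symm _ _ h
          rw [hy2] at this
          exact h34' (Option.some.inj this)
        · subst h2
          have := N.symm _ _ h
          rw [hw] at this
          exact h24 (Option.some.inj this)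
    apply hst y3 y4 (by simp) (by simp)
    refine ⟨h34, ?_, Or.inr ⟨y2, hw, by rw [r34, r32]; norm_num⟩, Or.inl hy4⟩
    rw [hw]
    simp only [ne_eq, Option.some.injEq]
    exact fun h => h24 h
end
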